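/- arXiv:2405.10611 — 6 statements merged into one kernel-verified Lean document; each statement's English description precedes it below -/
import Mathlib

section
/- Let A be a real m×n matrix and let l, u ∈ ℝ^n. Then exactly one of the following two options holds: (1) there exists a vector s ∈ ℝ^n such that A·s = 0 and l ≤ s ≤ u componentwise; or (2) there exists a contradiction vector w ∈ ℝ^m such that for every x ∈ ℝ^n with l ≤ x ≤ u one has wᵀ·A·x < 0. -/
open Matrix

lemma dot_as_clm (m : ℕ) (f : (Fin m → ℝ) →L[ℝ] ℝ) (y : Fin m → ℝ) :
    (fun i => f (Pi.single i 1)) ⬝ᵥ y = f y := by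
  have hy : y = ∑ i, y i • (Pi.single i 1 : Fin m → ℝ) := by
    ext j
    simp [Finset.sum_apply, Pi.single_apply]
  conv_rhs => rw [hy]
  simp [dotProduct, map_sum, mul_comm]

/-- **DNN Farkas lemma.** For a linear query ⟨A, u, l⟩, exactly one of the following
holds: (1) there is a solution `s` with `A·s = 0` and `l ≤ s ≤ u` componentwise, or
(2) there is a contradiction vector `w` such that `wᵀ·A·x < 0` for every `x` with
`l ≤ x ≤ u`. -/
theorem dnn_farkas_lemma (m n : ℕ) (A : Matrix (Fin m) (Fin n) ℝ) (l u : Fin n → ℝ) :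
    Xor'
      (∃ s : Fin n → ℝ, A.mulVec s = 0 ∧ ∀ j, l j ≤ s j ∧ s j ≤ u j)
      (∃ w : Fin m → ℝ, ∀ x : Fin n → ℝ,
        (∀ j, l j ≤ x j ∧ x j ≤ u j) → w ⬝ᵥ A.mulVec x < 0) := by
  by_cases h1 : ∃ s : Fin n → ℝ, A.mulVec s = 0 ∧ ∀ j, l j ≤ s j ∧ s j ≤ u j
  · left
    refine ⟨h1, ?_⟩
    rintro ⟨w, hw⟩
    obtain ⟨s, hAs, hs⟩ := h1
    have := hw s hs
    rw [hAs] at this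
    simp at this
  · right
    refine ⟨?_, h1⟩
    by_cases hbox : ∃ x : Fin n → ℝ, ∀ j, l j ≤ x j ∧ x j ≤ u j
    · -- the box is nonempty; separate 0 from the compact convex image
      set K : Set (Fin m → ℝ) := A.mulVecLin '' Set.Icc l u with hK
      have hconv : Convex ℝ K := (convex_Icc l u).linear_image A.mulVecLin
      have hcont : Continuous A.mulVecLin := A.mulVecLin.continuous_of_finiteDimensional
      have hclosed : IsClosed K := (isCompact_Icc.image hcont).isClosed
      have h0 : (0 : Fin m → ℝ) ∉ K := by
        rintro ⟨x, hx, hx0⟩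
        exact h1 ⟨x, hx0, fun j => ⟨hx.1 j, hx.2 j⟩⟩
      obtain ⟨f, c, hfc, hc0⟩ := geometric_hahn_banach_closed_point hconv hclosed h0
      rw [map_zero] at hc0
      refine ⟨fun i => f (Pi.single i 1), fun x hx => ?_⟩
      rw [show A.mulVec x = A.mulVecLin x from rfl, dot_as_clm]
      have hmem : A.mulVecLin x ∈ K :=
        ⟨x, ⟨fun j => (hx j).1, fun j => (hx j).2⟩, rfl⟩
      exact lt_trans (hfc _ hmem) hc0
    · exact ⟨0, fun x hx => absurd ⟨x, hx⟩ hbox⟩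
end

section
/- Let p₁, …, p_K and q₁, …, q_M be real linear polynomials in n variables, and let S(x) be the system requiring pᵢ(x) = 0 for all i ∈ {1,…,K} and qⱼ(x) ≥ 0 for all j ∈ {1,…,M}. Then S has a solution s ∈ ℝ^n if and only if there do not exist coefficients c₁,…,c_K ∈ ℝ and nonnegative coefficients d₁,…,d_M ∈ ℝ such that the linear polynomial Σᵢ cᵢ·pᵢ(x) + Σⱼ dⱼ·qⱼ(x) takes a negative value at every x ∈ ℝ^n. -/
open Finset Sum

/-- A real linear polynomial of size `n`: a constant term together with one
coefficient per variable. -/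
structure LinPoly (n : ℕ) where
  const : ℝ
  coeff : Fin n → ℝ

/-- Evaluation of a linear polynomial: `p(x) = α₀ + Σᵢ αᵢ·xᵢ`. -/
def LinPoly.eval {n : ℕ} (p : LinPoly n) (x : Fin n → ℝ) : ℝ :=
  p.const + ∑ i, p.coeff i * x i


lemma sum_dite_subtype {ι : Type*} [Fintype ι] (p : ι → Prop) [DecidablePred p]
    (f : (k : ι) → p k → ℝ) :
    ∑ k, (if h : p k then f k h else 0) = ∑ k : Subtype p, f k.1 k.2 := by
  rw [← Finset.sum_filter_of_ne (p := p) (f := fun k => if h : p k then f k h else 0)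
      (by intro x _ hx; by_contra hp; simp [hp] at hx)]
  rw [Finset.sum_subtype (p := p) (Finset.univ.filter p) (by simp)
      (fun k => if h : p k then f k h else 0)]
  exact Finset.sum_congr rfl (fun k _ => dif_pos k.2)

lemma comb_sum {n : ℕ} (u v x : Fin n → ℝ) (c d : ℝ) :
    ∑ i, (c * u i + d * v i) * x i = c * ∑ i, u i * x i + d * ∑ i, v i * x i := by
  rw [Finset.mul_sum, Finset.mul_sum, ← Finset.sum_add_distrib]
  exact Finset.sum_congr rfl fun i _ => by ring

lemma farkas_aux : ∀ (n : ℕ) (ι : Type) [Fintype ι] (a : ι → Fin n → ℝ) (b : ι → ℝ),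
    (¬ ∃ x : Fin n → ℝ, ∀ k, 0 ≤ b k + ∑ i, a k i * x i) →
    ∃ lam : ι → ℝ, (∀ k, 0 ≤ lam k) ∧ (∀ i, ∑ k, lam k * a k i = 0) ∧ ∑ k, lam k * b k < 0 := by
  intro n
  induction n with
  | zero =>
    intro ι _ a b h
    classical
    push_neg at h
    obtain ⟨k, hk⟩ := h (fun _ => 0)
    have hbk : b k < 0 := by simpa using hk
    refine ⟨fun j => if j = k then 1 else 0, ?_, fun i => i.elim0, ?_⟩
    · intro j; dsimp only; split_ifs <;> norm_num
    · simpa [ite_mul] using hbk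
  | succ n ih =>
    intro ι _ a b h
    classical
    set β : ι → ℝ := fun k => a k (Fin.last n) with hβdef
    let A : {k : ι // β k = 0} ⊕ {k : ι // 0 < β k} × {k : ι // β k < 0} → Fin n → ℝ :=
      Sum.elim (fun k i => a k.1 i.castSucc)
        (fun z i => (-β z.2.1) * a z.1.1 i.castSucc + β z.1.1 * a z.2.1 i.castSucc)
    let B : {k : ι // β k = 0} ⊕ {k : ι // 0 < β k} × {k : ι // β k < 0} → ℝ :=
      Sum.elim (fun k => b k.1)
        (fun z => (-β z.2.1) * b z.1.1 + β z.1.1 * b z.2.1)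
    have hnew : ¬ ∃ x : Fin n → ℝ, ∀ k, 0 ≤ B k + ∑ i, A k i * x i := by
      rintro ⟨x, hx⟩
      apply h
      set g : ι → ℝ := fun k => b k + ∑ i, a k i.castSucc * x i with hgdef
      have hz : ∀ k : {k : ι // β k = 0}, 0 ≤ g k.1 := fun k => hx (Sum.inl k)
      have hpn : ∀ z : {k : ι // 0 < β k} × {k : ι // β k < 0},
          0 ≤ (-β z.2.1) * g z.1.1 + β z.1.1 * g z.2.1 := by
        intro z
        have hv := hx (Sum.inr z)
        have : B (Sum.inr z) + ∑ i, A (Sum.inr z) i * x i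
            = (-β z.2.1) * g z.1.1 + β z.1.1 * g z.2.1 := by
          simp only [A, B, Sum.elim_inr, hgdef]
          rw [comb_sum]
          ring
        linarith [hv, this.symm.le]
      have key : ∀ (k : {k : ι // 0 < β k}) (l : {k : ι // β k < 0}),
          -g k.1 / β k.1 ≤ -g l.1 / β l.1 := by
        intro k l
        have hk := k.2; have hl := l.2
        have h1 := hpn (k, l)
        rw [show -g l.1 / β l.1 = g l.1 / (-β l.1) by rw [neg_div, div_neg]]
        rw [div_le_div_iff₀ hk (by linarith : (0:ℝ) < -β l.1)]
        nlinarith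
      obtain ⟨t, htP, htN⟩ :
          ∃ t : ℝ, (∀ k : {k : ι // 0 < β k}, -g k.1 / β k.1 ≤ t) ∧
            (∀ l : {k : ι // β k < 0}, t ≤ -g l.1 / β l.1) := by
        by_cases hP : Nonempty {k : ι // 0 < β k}
        · refine ⟨Finset.univ.sup' Finset.univ_nonempty (fun k : {k : ι // 0 < β k} => -g k.1 / β k.1), ?_, ?_⟩
          · exact fun k => Finset.le_sup' (fun k : {k : ι // 0 < β k} => -g k.1 / β k.1) (Finset.mem_univ k)
          · exact fun l => Finset.sup'_le _ _ (fun k _ => key k l)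
        · by_cases hN : Nonempty {k : ι // β k < 0}
          · refine ⟨Finset.univ.inf' Finset.univ_nonempty (fun l : {k : ι // β k < 0} => -g l.1 / β l.1), ?_, ?_⟩
            · exact fun k => absurd (⟨k⟩ : Nonempty _) hP
            · exact fun l => Finset.inf'_le _ (Finset.mem_univ l)
          · exact ⟨0, fun k => absurd (⟨k⟩ : Nonempty _) hP,
              fun l => absurd (⟨l⟩ : Nonempty _) hN⟩
      refine ⟨(Fin.snoc (α := fun _ => ℝ) x t), fun k => ?_⟩
      have hval : b k + ∑ i, a k i * Fin.snoc (α := fun _ => ℝ) x t i = g k + β k * t := by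
        have hc := Fin.sum_univ_castSucc (fun i => a k i * Fin.snoc (α := fun _ => ℝ) x t i)
        simp only [Fin.snoc_castSucc, Fin.snoc_last] at hc
        rw [hc, hgdef, hβdef]
        ring
      rw [hval]
      rcases lt_trichotomy (β k) 0 with hk | hk | hk
      · have ht := htN ⟨k, hk⟩
        have hne : β k ≠ 0 := ne_of_lt hk
        have h2 : β k * (-g k / β k) ≤ β k * t := mul_le_mul_of_nonpos_left ht (le_of_lt hk)
        have h3 : β k * (-g k / β k) = -g k := by field_simp
        clear_value g β
        linarith
      · have := hz ⟨k, hk⟩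
        rw [hk, zero_mul, add_zero]
        exact this
      · have ht := htP ⟨k, hk⟩
        have hne : β k ≠ 0 := ne_of_gt hk
        have h2 : β k * (-g k / β k) ≤ β k * t := by
          exact mul_le_mul_of_nonneg_left ht (le_of_lt hk)
        have h3 : β k * (-g k / β k) = -g k := by field_simp
        clear_value g β
        linarith
    obtain ⟨μ, hμ0, hμa, hμb⟩ := ih _ A B hnew
    set lam : ι → ℝ := fun k =>
      (if h : β k = 0 then μ (Sum.inl ⟨k, h⟩) else 0)
      + (if h : 0 < β k then ∑ l : {k : ι // β k < 0}, (-β l.1) * μ (Sum.inr (⟨k, h⟩, l)) else 0)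
      + (if h : β k < 0 then ∑ p : {k : ι // 0 < β k}, β p.1 * μ (Sum.inr (p, ⟨k, h⟩)) else 0)
      with hlam
    have hsum : ∀ v : ι → ℝ, ∑ k, lam k * v k
        = ∑ k : {k : ι // β k = 0}, μ (Sum.inl k) * v k.1
          + ∑ z : {k : ι // 0 < β k} × {k : ι // β k < 0},
              μ (Sum.inr z) * ((-β z.2.1) * v z.1.1 + β z.1.1 * v z.2.1) := by
      intro v
      have e1 : ∑ k, (if h : β k = 0 then μ (Sum.inl ⟨k, h⟩) else 0) * v k
          = ∑ k : {k : ι // β k = 0}, μ (Sum.inl k) * v k.1 := by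
        calc ∑ k, (if h : β k = 0 then μ (Sum.inl ⟨k, h⟩) else 0) * v k
            = ∑ k, (if h : β k = 0 then μ (Sum.inl ⟨k, h⟩) * v k else 0) :=
              Finset.sum_congr rfl fun k _ => by split_ifs <;> simp
          _ = ∑ k : {k : ι // β k = 0}, μ (Sum.inl ⟨k.1, k.2⟩) * v k.1 := sum_dite_subtype _ _
          _ = ∑ k : {k : ι // β k = 0}, μ (Sum.inl k) * v k.1 := by simp
      have e2 : ∑ k, (if h : 0 < β k then
            ∑ l : {k : ι // β k < 0}, (-β l.1) * μ (Sum.inr (⟨k, h⟩, l)) else 0) * v k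
          = ∑ k : {k : ι // 0 < β k}, ∑ l : {k : ι // β k < 0},
              μ (Sum.inr (k, l)) * ((-β l.1) * v k.1) := by
        calc ∑ k, (if h : 0 < β k then
              ∑ l : {k : ι // β k < 0}, (-β l.1) * μ (Sum.inr (⟨k, h⟩, l)) else 0) * v k
            = ∑ k, (if h : 0 < β k then
                (∑ l : {k : ι // β k < 0}, (-β l.1) * μ (Sum.inr (⟨k, h⟩, l))) * v k else 0) :=
              Finset.sum_congr rfl fun k _ => by split_ifs <;> simp
          _ = ∑ k : {k : ι // 0 < β k},
                (∑ l : {k : ι // β k < 0}, (-β l.1) * μ (Sum.inr (⟨k.1, k.2⟩, l))) * v k.1 :=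
              sum_dite_subtype _ _
          _ = ∑ k : {k : ι // 0 < β k}, ∑ l : {k : ι // β k < 0},
                μ (Sum.inr (k, l)) * ((-β l.1) * v k.1) := by
              refine Finset.sum_congr rfl fun k _ => ?_
              rw [Finset.sum_mul]
              exact Finset.sum_congr rfl fun l _ => by ring
      have e3 : ∑ k, (if h : β k < 0 then
            ∑ p : {k : ι // 0 < β k}, β p.1 * μ (Sum.inr (p, ⟨k, h⟩)) else 0) * v k
          = ∑ k : {k : ι // 0 < β k}, ∑ l : {k : ι // β k < 0},
              μ (Sum.inr (k, l)) * (β k.1 * v l.1) := by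
        calc ∑ k, (if h : β k < 0 then
              ∑ p : {k : ι // 0 < β k}, β p.1 * μ (Sum.inr (p, ⟨k, h⟩)) else 0) * v k
            = ∑ k, (if h : β k < 0 then
                (∑ p : {k : ι // 0 < β k}, β p.1 * μ (Sum.inr (p, ⟨k, h⟩))) * v k else 0) :=
              Finset.sum_congr rfl fun k _ => by split_ifs <;> simp
          _ = ∑ l : {k : ι // β k < 0},
                (∑ p : {k : ι // 0 < β k}, β p.1 * μ (Sum.inr (p, ⟨l.1, l.2⟩))) * v l.1 :=
              sum_dite_subtype _ _
          _ = ∑ l : {k : ι // β k < 0}, ∑ k : {k : ι // 0 < β k},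
                μ (Sum.inr (k, l)) * (β k.1 * v l.1) := by
              refine Finset.sum_congr rfl fun l _ => ?_
              rw [Finset.sum_mul]
              exact Finset.sum_congr rfl fun k _ => by ring
          _ = ∑ k : {k : ι // 0 < β k}, ∑ l : {k : ι // β k < 0},
                μ (Sum.inr (k, l)) * (β k.1 * v l.1) := Finset.sum_comm
      calc ∑ k, lam k * v k
          = ∑ k, ((if h : β k = 0 then μ (Sum.inl ⟨k, h⟩) else 0) * v k
            + (if h : 0 < β k then
                ∑ l : {k : ι // β k < 0}, (-β l.1) * μ (Sum.inr (⟨k, h⟩, l)) else 0) * v k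
            + (if h : β k < 0 then
                ∑ p : {k : ι // 0 < β k}, β p.1 * μ (Sum.inr (p, ⟨k, h⟩)) else 0) * v k) :=
            Finset.sum_congr rfl fun k _ => by rw [hlam]; ring
        _ = (∑ k, (if h : β k = 0 then μ (Sum.inl ⟨k, h⟩) else 0) * v k)
            + ((∑ k, (if h : 0 < β k then
                ∑ l : {k : ι // β k < 0}, (-β l.1) * μ (Sum.inr (⟨k, h⟩, l)) else 0) * v k)
            + ∑ k, (if h : β k < 0 then
                ∑ p : {k : ι // 0 < β k}, β p.1 * μ (Sum.inr (p, ⟨k, h⟩)) else 0) * v k) := by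
            rw [← Finset.sum_add_distrib, ← Finset.sum_add_distrib]
            exact Finset.sum_congr rfl fun k _ => by ring
        _ = ∑ k : {k : ι // β k = 0}, μ (Sum.inl k) * v k.1
            + ∑ z : {k : ι // 0 < β k} × {k : ι // β k < 0},
                μ (Sum.inr z) * ((-β z.2.1) * v z.1.1 + β z.1.1 * v z.2.1) := by
            rw [e1, e2, e3, Fintype.sum_prod_type, ← Finset.sum_add_distrib]
            congr 1
            refine Finset.sum_congr rfl fun k _ => ?_
            rw [← Finset.sum_add_distrib]
            exact Finset.sum_congr rfl fun l _ => by ring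
    refine ⟨lam, ?_, ?_, ?_⟩
    · intro k
      rw [hlam]
      refine add_nonneg (add_nonneg ?_ ?_) ?_
      · split_ifs with hh; exacts [hμ0 _, le_rfl]
      · split_ifs with hh
        · exact Finset.sum_nonneg fun l _ => mul_nonneg (by linarith [l.2]) (hμ0 _)
        · exact le_rfl
      · split_ifs with hh
        · exact Finset.sum_nonneg fun p _ => mul_nonneg (le_of_lt p.2) (hμ0 _)
        · exact le_rfl
    · intro i
      induction i using Fin.lastCases with
      | last =>
        rw [hsum (fun k => a k (Fin.last n))]
        have t1 : ∀ k : {k : ι // β k = 0}, μ (Sum.inl k) * a k.1 (Fin.last n) = 0 := by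
          intro k
          have : a k.1 (Fin.last n) = 0 := k.2
          rw [this, mul_zero]
        have t2 : ∀ z : {k : ι // 0 < β k} × {k : ι // β k < 0},
            μ (Sum.inr z) * ((-β z.2.1) * a z.1.1 (Fin.last n)
              + β z.1.1 * a z.2.1 (Fin.last n)) = 0 := by
          intro z
          have h1 : a z.1.1 (Fin.last n) = β z.1.1 := rfl
          have h2 : a z.2.1 (Fin.last n) = β z.2.1 := rfl
          rw [h1, h2]; ring
        rw [Finset.sum_congr rfl fun k _ => t1 k, Finset.sum_congr rfl fun z _ => t2 z]
        simp
      | cast j =>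
        rw [hsum (fun k => a k j.castSucc)]
        have := hμa j
        rw [Fintype.sum_sum_type] at this
        simpa [A] using this
    · rw [hsum b]
      have := hμb
      rw [Fintype.sum_sum_type] at this
      simpa [B] using this

lemma sum_mul_eval {ι : Type*} [Fintype ι] {n : ℕ} (t : ι → ℝ) (r : ι → LinPoly n)
    (x : Fin n → ℝ) :
    ∑ k, t k * (r k).eval x
      = (∑ k, t k * (r k).const) + ∑ i, (∑ k, t k * (r k).coeff i) * x i := by
  simp only [LinPoly.eval, mul_add, Finset.sum_add_distrib, Finset.mul_sum, Finset.sum_mul]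
  congr 1
  rw [Finset.sum_comm]
  exact Finset.sum_congr rfl fun i _ => Finset.sum_congr rfl fun k _ => (mul_assoc _ _ _).symm

/-- **Polynomial Farkas lemma.** The system of linear polynomial equations given by
equalities `pᵢ(x) = 0` (i ∈ {1,…,K}) and inequalities `qⱼ(x) ≥ 0` (j ∈ {1,…,M}) has a
solution iff there do not exist coefficients `c` and nonnegative coefficients `d` such
that the linear combination `Σᵢ cᵢ·pᵢ + Σⱼ dⱼ·qⱼ` is negative at every point. -/
theorem polynomial_farkas (n K M : ℕ) (p : Fin K → LinPoly n) (q : Fin M → LinPoly n) :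
    (∃ s : Fin n → ℝ, (∀ i, (p i).eval s = 0) ∧ (∀ j, (q j).eval s ≥ 0)) ↔
      ¬ ∃ (c : Fin K → ℝ) (d : Fin M → ℝ), (∀ j, 0 ≤ d j) ∧
        ∀ x : Fin n → ℝ, (∑ i, c i * (p i).eval x) + (∑ j, d j * (q j).eval x) < 0 := by
  classical
  constructor
  · rintro ⟨s, hp, hq⟩ ⟨c, d, hd, hneg⟩
    have h1 : ∑ i, c i * (p i).eval s = 0 := by simp [hp]
    have h2 : 0 ≤ ∑ j, d j * (q j).eval s :=
      Finset.sum_nonneg fun j _ => mul_nonneg (hd j) (hq j)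
    have := hneg s
    linarith
  · intro h
    by_contra hs
    apply h
    set A : (Fin K ⊕ Fin K ⊕ Fin M) → Fin n → ℝ :=
      Sum.elim (fun k => (p k).coeff)
        (Sum.elim (fun k i => -(p k).coeff i) (fun j => (q j).coeff)) with hA
    set B : (Fin K ⊕ Fin K ⊕ Fin M) → ℝ :=
      Sum.elim (fun k => (p k).const)
        (Sum.elim (fun k => -(p k).const) (fun j => (q j).const)) with hB
    have hinf : ¬ ∃ x : Fin n → ℝ, ∀ k, 0 ≤ B k + ∑ i, A k i * x i := by
      rintro ⟨x, hx⟩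
      apply hs
      refine ⟨x, fun k => ?_, fun j => ?_⟩
      · have h1 := hx (Sum.inl k)
        have h2 := hx (Sum.inr (Sum.inl k))
        simp only [hA, hB, Sum.elim_inl, Sum.elim_inr] at h1 h2
        have e2 : -(p k).const + ∑ i, (-(p k).coeff i) * x i = -((p k).eval x) := by
          simp [LinPoly.eval, neg_mul, Finset.sum_neg_distrib]
          ring
        rw [e2] at h2
        have h1' : 0 ≤ (p k).eval x := h1
        have : (p k).eval x ≤ 0 := by linarith
        linarith
      · exact hx (Sum.inr (Sum.inr j))
    obtain ⟨lam, hl0, hla, hlb⟩ := farkas_aux n _ A B hinf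
    refine ⟨fun k => lam (Sum.inl k) - lam (Sum.inr (Sum.inl k)),
      fun j => lam (Sum.inr (Sum.inr j)), fun j => hl0 _, ?_⟩
    intro x
    have hG : ∀ i, (∑ k, (lam (Sum.inl k) - lam (Sum.inr (Sum.inl k))) * (p k).coeff i)
        + ∑ j, lam (Sum.inr (Sum.inr j)) * (q j).coeff i = 0 := by
      intro i
      have hh := hla i
      rw [Fintype.sum_sum_type, Fintype.sum_sum_type] at hh
      simp only [hA, Sum.elim_inl, Sum.elim_inr] at hh
      have e2 : ∑ k, lam (Sum.inr (Sum.inl k)) * (-(p k).coeff i)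
          = -∑ k, lam (Sum.inr (Sum.inl k)) * (p k).coeff i := by
        simp [mul_neg, Finset.sum_neg_distrib]
      rw [e2] at hh
      have e1 : ∑ k, (lam (Sum.inl k) - lam (Sum.inr (Sum.inl k))) * (p k).coeff i
          = (∑ k, lam (Sum.inl k) * (p k).coeff i)
            - ∑ k, lam (Sum.inr (Sum.inl k)) * (p k).coeff i := by
        rw [← Finset.sum_sub_distrib]
        exact Finset.sum_congr rfl fun k _ => sub_mul _ _ _
      rw [e1]
      linarith
    have hC : (∑ k, (lam (Sum.inl k) - lam (Sum.inr (Sum.inl k))) * (p k).const)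
        + ∑ j, lam (Sum.inr (Sum.inr j)) * (q j).const < 0 := by
      have hh := hlb
      rw [Fintype.sum_sum_type, Fintype.sum_sum_type] at hh
      simp only [hB, Sum.elim_inl, Sum.elim_inr] at hh
      have e2 : ∑ k, lam (Sum.inr (Sum.inl k)) * (-(p k).const)
          = -∑ k, lam (Sum.inr (Sum.inl k)) * (p k).const := by
        simp [mul_neg, Finset.sum_neg_distrib]
      rw [e2] at hh
      have e1 : ∑ k, (lam (Sum.inl k) - lam (Sum.inr (Sum.inl k))) * (p k).const
          = (∑ k, lam (Sum.inl k) * (p k).const)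
            - ∑ k, lam (Sum.inr (Sum.inl k)) * (p k).const := by
        rw [← Finset.sum_sub_distrib]
        exact Finset.sum_congr rfl fun k _ => sub_mul _ _ _
      rw [e1]
      linarith
    rw [sum_mul_eval, sum_mul_eval]
    have hx0 : (∑ i, (∑ k, (lam (Sum.inl k) - lam (Sum.inr (Sum.inl k))) * (p k).coeff i) * x i)
        + ∑ i, (∑ j, lam (Sum.inr (Sum.inr j)) * (q j).coeff i) * x i = 0 := by
      rw [← Finset.sum_add_distrib]
      refine Finset.sum_eq_zero fun i _ => ?_
      rw [← add_mul, hG i, zero_mul]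
    linarith
end

section
/- If there exist w ∈ ℝ^m and nonnegative vectors d, e ∈ ℝ^n such that the linear polynomial P(x) = Σ_{i=1}^m wᵢ·(Σ_{j=1}^n A_{ij}·xⱼ) + Σ_{j=1}^n dⱼ·(uⱼ − xⱼ) + Σ_{k=1}^n eₖ·(xₖ − lₖ) has all its variable coefficients equal to 0 and a strictly negative constant term, then there is no vector s ∈ ℝ^n with A·s = 0 and l ≤ s ≤ u componentwise. -/
open Matrix

/-- **Leaf certification.** If there exist a contradiction vector `w` and nonnegative
bound coefficients `d`, `e` such that the linear polynomial
`P(x) = Σᵢ wᵢ·(Σⱼ A_{ij}·xⱼ) + Σⱼ dⱼ·(uⱼ − xⱼ) + Σₖ eₖ·(xₖ − lₖ)`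
has all its variable coefficients equal to `0` (the coefficient of `xⱼ` is
`Σᵢ wᵢ·A_{ij} − dⱼ + eⱼ`) and a strictly negative constant term
(`Σⱼ dⱼ·uⱼ − Σₖ eₖ·lₖ`), then the linear query ⟨A, u, l⟩ has no solution. -/
theorem leaf_certification_sound (m n : ℕ) (A : Matrix (Fin m) (Fin n) ℝ)
    (l u : Fin n → ℝ)
    (h : ∃ (w : Fin m → ℝ) (d e : Fin n → ℝ), (∀ j, 0 ≤ d j) ∧ (∀ k, 0 ≤ e k) ∧
      (∀ j : Fin n, (∑ i, w i * A i j) - d j + e j = 0) ∧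
      ((∑ j, d j * u j) - (∑ k, e k * l k) < 0)) :
    ¬ ∃ s : Fin n → ℝ, A.mulVec s = 0 ∧ ∀ j, l j ≤ s j ∧ s j ≤ u j := by
  rintro ⟨s, hAs, hbnd⟩
  obtain ⟨w, d, e, hd, he, hcoef, hconst⟩ := h
  -- P(s) evaluated
  have key : (∑ j, d j * (u j - s j)) + (∑ j, e j * (s j - l j))
      = (∑ j, d j * u j) - (∑ k, e k * l k) := by
    have hzero : ∑ j, (∑ i, w i * A i j) * s j = 0 := by
      have : ∑ j, (∑ i, w i * A i j) * s j = ∑ i, w i * (A.mulVec s i) := by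
        simp only [Matrix.mulVec, dotProduct, Finset.mul_sum, Finset.sum_mul, mul_assoc]
        rw [Finset.sum_comm]
      rw [this, hAs]; simp
    have hsum : ∑ j, (d j - e j) * s j = 0 := by
      have : ∀ j, (d j - e j) * s j = (∑ i, w i * A i j) * s j := by
        intro j
        have := hcoef j
        have : d j - e j = ∑ i, w i * A i j := by linarith
        rw [this]
      rw [Finset.sum_congr rfl fun j _ => this j, hzero]
    have expand : (∑ j, d j * (u j - s j)) + (∑ j, e j * (s j - l j))
        = ((∑ j, d j * u j) - (∑ k, e k * l k)) - ∑ j, (d j - e j) * s j := by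
      rw [← Finset.sum_add_distrib]
      rw [sub_sub, ← Finset.sum_add_distrib, ← Finset.sum_sub_distrib]
      congr 1; ext j; ring
    rw [expand, hsum, sub_zero]
  have pos : 0 ≤ (∑ j, d j * (u j - s j)) + (∑ j, e j * (s j - l j)) := by
    apply add_nonneg <;> apply Finset.sum_nonneg <;> intro j _
    · exact mul_nonneg (hd j) (by linarith [(hbnd j).2])
    · exact mul_nonneg (he j) (by linarith [(hbnd j).1])
  linarith [key ▸ pos]
end

section
/- Let l, u, x ∈ ℝ^n and let f, b, aux ∈ {0,…,n−1} be pairwise distinct indices. Define the inactive-phase bounds l^L := l[l_f/0], u^L := u[u_b/0, u_f/0] and the active-phase bounds l^R := l[l_b/0, l_aux/0], u^R := u[u_aux/0]. If l ≤ x ≤ u componentwise, x_f = ReLU(x_b), and x_f − x_b − x_aux = 0, then l^L ≤ x ≤ u^L componentwise or l^R ≤ x ≤ u^R componentwise. -/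
/-- The rectified linear unit: `ReLU(x) = max(x, 0)`. -/
def ReLU (x : ℝ) : ℝ := max x 0

/-- **ReLU splits are covering.** Let `f, b, aux` be pairwise distinct indices, and set
the inactive-phase bounds `l^L := l[l_f/0]`, `u^L := u[u_b/0, u_f/0]` and the
active-phase bounds `l^R := l[l_b/0, l_aux/0]`, `u^R := u[u_aux/0]`.
If `l ≤ x ≤ u` componentwise, `x_f = ReLU(x_b)` and `x_f − x_b − x_aux = 0`, then
`l^L ≤ x ≤ u^L` componentwise or `l^R ≤ x ≤ u^R` componentwise. -/
theorem relu_split_covering (n : ℕ) (l u x : Fin n → ℝ) (f b aux : Fin n)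
    (hfb : f ≠ b) (hfaux : f ≠ aux) (hbaux : b ≠ aux)
    (hbounds : ∀ j, l j ≤ x j ∧ x j ≤ u j)
    (hrelu : x f = ReLU (x b))
    (haux : x f - x b - x aux = 0) :
    (∀ j, Function.update l f 0 j ≤ x j ∧
          x j ≤ Function.update (Function.update u b 0) f 0 j) ∨
    (∀ j, Function.update (Function.update l b 0) aux 0 j ≤ x j ∧
          x j ≤ Function.update u aux 0 j) := by
  rcases le_total (x b) 0 with hb | hb
  · left
    have hf : x f = 0 := by simp [hrelu, ReLU, max_eq_right hb]
    intro j
    rcases eq_or_ne j f with rfl | hjf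
    · simp [hf, (hbounds j).1, le_of_eq hf.symm]
    · rcases eq_or_ne j b with rfl | hjb
      · simp [Function.update_of_ne hjf, Function.update_of_ne (Ne.symm hfb), hb,
          (hbounds j).1]
      · simp [Function.update_of_ne hjf, Function.update_of_ne hjb, hbounds j]
  · right
    have hf : x f = x b := by simp [hrelu, ReLU, max_eq_left hb]
    have hx : x aux = 0 := by linarith
    intro j
    rcases eq_or_ne j aux with rfl | hja
    · simp [hx]
    · rcases eq_or_ne j b with rfl | hjb
      · simp [Function.update_of_ne hja, Function.update_of_ne hbaux, hb,
          (hbounds j).2]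
      · simp [Function.update_of_ne hja, Function.update_of_ne hjb, hbounds j]
end

section
/- Let ⟨A, u, l, C⟩ be a DNN verification query with A ∈ ℝ^{m×n}, l, u ∈ ℝ^n and a set C of ReLU constraints given by triples of pairwise distinct indices (b, f, aux), and let s ∈ ℝ^n satisfy the query. Consider a split that is either a single-variable split on index i with value k, producing child bounds (l, u[uᵢ/k]) and (l[lᵢ/k], u), or a ReLU split on a constraint (b, f, aux) ∈ C such that s_f − s_b − s_aux = 0, producing child bounds (l[l_f/0], u[u_b/0, u_f/0]) and (l[l_b/0, l_aux/0], u[u_aux/0]). Then s satisfies the child query ⟨A, u^L, l^L, C⟩ or the child query ⟨A, u^R, l^R, C⟩, where (l^L, u^L) and (l^R, u^R) are the two child bound pairs. -/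
open Matrix

/-- A split: either a single-variable split on index `i` with value `k`, or a ReLU
split on a constraint given by the triple of indices `(b, f, aux)`. -/
inductive Split (n : ℕ) where
  | single (i : Fin n) (k : ℝ)
  | relu (b f aux : Fin n)

/-- `update_bounds`: given bounds `(l, u)` and a split, compute the pairs of child
bounds `((l^L, u^L), (l^R, u^R))`. -/
def updateBounds {n : ℕ} (l u : Fin n → ℝ) :
    Split n → ((Fin n → ℝ) × (Fin n → ℝ)) × ((Fin n → ℝ) × (Fin n → ℝ))
  | .single i k => ((l, Function.update u i k), (Function.update l i k, u))
  | .relu b f aux =>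
      ((Function.update l f 0, Function.update (Function.update u b 0) f 0),
       (Function.update (Function.update l b 0) aux 0, Function.update u aux 0))

/-- A vector `s` satisfies the DNN verification query ⟨A, u, l, C⟩ if `A·s = 0`,
`l ≤ s ≤ u` componentwise, and `s_f = ReLU(s_b)` for every `(b, f, aux) ∈ C`. -/
def SatQuery {m n : ℕ} (A : Matrix (Fin m) (Fin n) ℝ) (u l : Fin n → ℝ)
    (C : Finset (Fin n × Fin n × Fin n)) (s : Fin n → ℝ) : Prop :=
  A.mulVec s = 0 ∧ (∀ j, l j ≤ s j ∧ s j ≤ u j) ∧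
    ∀ c ∈ C, s c.2.1 = ReLU (s c.1)

/-- **Splits are covering.** If `s` satisfies ⟨A, u, l, C⟩ (where the ReLU constraints
in `C` have pairwise distinct indices) and the split is either a single-variable split
or a ReLU split on a constraint `(b, f, aux) ∈ C` with `s_f − s_b − s_aux = 0`, then
`s` satisfies one of the two child queries produced by `update_bounds`. -/
theorem splits_covering (m n : ℕ) (A : Matrix (Fin m) (Fin n) ℝ) (l u : Fin n → ℝ)
    (C : Finset (Fin n × Fin n × Fin n))
    (hC : ∀ c ∈ C, c.1 ≠ c.2.1 ∧ c.1 ≠ c.2.2 ∧ c.2.1 ≠ c.2.2)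
    (s : Fin n → ℝ) (hs : SatQuery A u l C s)
    (sp : Split n)
    (hsp : ∀ b f aux, sp = Split.relu b f aux →
      (b, f, aux) ∈ C ∧ s f - s b - s aux = 0) :
    SatQuery A (updateBounds l u sp).1.2 (updateBounds l u sp).1.1 C s ∨
    SatQuery A (updateBounds l u sp).2.2 (updateBounds l u sp).2.1 C s := by
  obtain ⟨hA, hb, hrelu⟩ := hs
  cases sp with
  | single i k =>
    rcases le_total (s i) k with h | h
    · left
      refine ⟨hA, fun j => ⟨(hb j).1, ?_⟩, hrelu⟩
      simp only [updateBounds, Function.update_apply]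
      split <;> simp_all [(hb j).2]
    · right
      refine ⟨hA, fun j => ⟨?_, (hb j).2⟩, hrelu⟩
      simp only [updateBounds, Function.update_apply]
      split <;> simp_all [(hb j).1]
  | relu b f aux =>
    obtain ⟨hmem, heq⟩ := hsp b f aux rfl
    have hf : s f = ReLU (s b) := hrelu _ hmem
    rcases le_total (s b) 0 with h | h
    · have hf0 : s f = 0 := by simp [hf, ReLU, max_eq_right h]
      left
      refine ⟨hA, fun j => ⟨?_, ?_⟩, hrelu⟩
      · rcases eq_or_ne j f with rfl | hjf
        · simp [updateBounds, hf0]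
        · simpa [updateBounds, Function.update_apply, hjf] using (hb j).1
      · rcases eq_or_ne j f with rfl | hjf
        · simp [updateBounds, hf0]
        · rcases eq_or_ne j b with rfl | hjb
          · simpa [updateBounds, Function.update_apply, hjf] using h
          · simpa [updateBounds, Function.update_apply, hjf, hjb] using (hb j).2
    · have hf0 : s f = s b := by simp [hf, ReLU, max_eq_left h]
      have ha : s aux = 0 := by linarith
      right
      refine ⟨hA, fun j => ⟨?_, ?_⟩, hrelu⟩
      · rcases eq_or_ne j aux with rfl | hja
        · simp [updateBounds, ha]
        · rcases eq_or_ne j b with rfl | hjb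
          · simpa [updateBounds, Function.update_apply, hja] using h
          · simpa [updateBounds, Function.update_apply, hja, hjb] using (hb j).1
      · rcases eq_or_ne j aux with rfl | hja
        · simp [updateBounds, ha]
        · simpa [updateBounds, Function.update_apply, hja] using (hb j).2
end

section
/- Let ⟨A, u, l, C⟩ be a DNN verification query and let T be a proof tree each of whose ReLU splits uses a constraint from C, such that for every constraint (b, f, aux) ∈ C the equation x_f − x_b − x_aux = 0 is entailed by the tableau (i.e. every s with A·s = 0 satisfies s_f − s_b − s_aux = 0). If check_tree(A, u, l, C, T) returns true, then there is no vector s ∈ ℝ^n satisfying ⟨A, u, l, C⟩. -/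
open Matrix

/-- A Marabou proof tree: a leaf carries a contradiction vector `w` together with
nonnegative bound coefficients `d`, `e`; an internal node carries a split and two
proof subtrees. -/
inductive ProofTree (m n : ℕ) where
  | leaf (w : Fin m → ℝ) (d e : Fin n → ℝ) (hd : ∀ j, 0 ≤ d j) (he : ∀ k, 0 ≤ e k)
  | node (sp : Split n) (left right : ProofTree m n)

/-- A split is valid w.r.t. the constraint set `C` if it is a single-variable split,
or a ReLU split whose triple of indices belongs to `C`. -/
def ValidSplit {n : ℕ} (C : Finset (Fin n × Fin n × Fin n)) : Split n → Prop
  | .single _ _ => True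
  | .relu b f aux => (b, f, aux) ∈ C

/-- The proof-tree checker `check_tree`. At a leaf `(w, d, e)` it succeeds iff the
linear polynomial `Σᵢ wᵢ·(Σⱼ A_{ij}·xⱼ) + Σⱼ dⱼ·(uⱼ − xⱼ) + Σₖ eₖ·(xₖ − lₖ)` has all
variable coefficients `0` and a negative constant term; at an internal node it
computes the child bounds with `update_bounds` and succeeds iff the split is valid
and both recursive checks succeed. -/
def CheckTree {m n : ℕ} (A : Matrix (Fin m) (Fin n) ℝ) (u l : Fin n → ℝ)
    (C : Finset (Fin n × Fin n × Fin n)) : ProofTree m n → Prop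
  | .leaf w d e _ _ =>
      (∀ j : Fin n, (∑ i, w i * A i j) - d j + e j = 0) ∧
      ((∑ j, d j * u j) - (∑ k, e k * l k) < 0)
  | .node sp left right =>
      ValidSplit C sp ∧
      CheckTree A (updateBounds l u sp).1.2 (updateBounds l u sp).1.1 C left ∧
      CheckTree A (updateBounds l u sp).2.2 (updateBounds l u sp).2.1 C right

/-- **Soundness of the proof-tree checker.** If every constraint in `C` consists of
pairwise distinct indices and the equation `x_f − x_b − x_aux = 0` is entailed by the
tableau for every `(b, f, aux) ∈ C`, and `check_tree(A, u, l, C, T)` succeeds, then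
no vector satisfies the DNN verification query ⟨A, u, l, C⟩. -/
theorem check_tree_sound (m n : ℕ) (A : Matrix (Fin m) (Fin n) ℝ) (l u : Fin n → ℝ)
    (C : Finset (Fin n × Fin n × Fin n))
    (hC : ∀ c ∈ C, c.1 ≠ c.2.1 ∧ c.1 ≠ c.2.2 ∧ c.2.1 ≠ c.2.2)
    (hent : ∀ c ∈ C, ∀ s : Fin n → ℝ, A.mulVec s = 0 → s c.2.1 - s c.1 - s c.2.2 = 0)
    (T : ProofTree m n) (hcheck : CheckTree A u l C T) :
    ¬ ∃ s : Fin n → ℝ, SatQuery A u l C s := by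
  revert hcheck
  induction T generalizing u l with
  | leaf w d e hd he =>
    intro hcheck
    rintro ⟨s, hA, hb, -⟩
    obtain ⟨hcoef, hconst⟩ := hcheck
    have hz : ∀ i, ∑ j, A i j * s j = 0 := by
      intro i
      have := congrFun hA i
      simpa [Matrix.mulVec, dotProduct] using this
    have h2 : ∑ j, (∑ i, w i * A i j) * s j = 0 := by
      calc ∑ j, (∑ i, w i * A i j) * s j
          = ∑ j, ∑ i, w i * A i j * s j := by simp [Finset.sum_mul]
        _ = ∑ i, ∑ j, w i * A i j * s j := Finset.sum_comm
        _ = ∑ i, w i * ∑ j, A i j * s j := by simp [Finset.mul_sum, mul_assoc]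
        _ = 0 := by simp [hz]
    have h1 : ∑ j, ((∑ i, w i * A i j) - d j + e j) * s j = 0 := by
      simp [hcoef]
    have h3 : (∑ j, (∑ i, w i * A i j) * s j) - (∑ j, d j * s j) + (∑ j, e j * s j) = 0 := by
      rw [← Finset.sum_sub_distrib, ← Finset.sum_add_distrib]
      simpa [sub_mul, add_mul] using h1
    have h4 : ∑ j, d j * s j ≤ ∑ j, d j * u j :=
      Finset.sum_le_sum fun j _ => mul_le_mul_of_nonneg_left (hb j).2 (hd j)
    have h5 : ∑ j, e j * l j ≤ ∑ j, e j * s j :=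
      Finset.sum_le_sum fun j _ => mul_le_mul_of_nonneg_left (hb j).1 (he j)
    linarith
  | node sp left right ihl ihr =>
    intro hcheck
    obtain ⟨hv, hL, hR⟩ := hcheck
    rintro ⟨s, hA, hb, hr⟩
    cases sp with
    | single i k =>
      rcases le_total (s i) k with h | h
      · exact ihl _ _ hL ⟨s, hA, fun j => ⟨(hb j).1, by
          rcases eq_or_ne j i with rfl | hne
          · simpa [updateBounds] using h
          · simpa [updateBounds, Function.update_of_ne hne] using (hb j).2⟩, hr⟩
      · exact ihr _ _ hR ⟨s, hA, fun j => ⟨by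
          rcases eq_or_ne j i with rfl | hne
          · simpa [updateBounds] using h
          · simpa [updateBounds, Function.update_of_ne hne] using (hb j).1, (hb j).2⟩, hr⟩
    | relu b f aux =>
      have hv' : (b, f, aux) ∈ C := hv
      obtain ⟨hbf, hbaux, hfaux⟩ := hC _ hv'
      have hsum : s f - s b - s aux = 0 := hent _ hv' s hA
      have hrelu : s f = max (s b) 0 := hr _ hv'
      rcases le_total (s b) 0 with h | h
      · have hf : s f = 0 := by rw [hrelu, max_eq_right h]
        refine ihl _ _ hL ⟨s, hA, fun j => ⟨?_, ?_⟩, hr⟩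
        · rcases eq_or_ne j f with rfl | hne
          · simp [updateBounds, hf, Function.update_of_ne]
          · simpa [updateBounds, Function.update_of_ne hne] using (hb j).1
        · rcases eq_or_ne j f with rfl | hne
          · simp [updateBounds, hf, Function.update_of_ne]
          · rcases eq_or_ne j b with rfl | hne2
            · simpa [updateBounds, Function.update_of_ne hne] using h
            · simpa [updateBounds, Function.update_of_ne hne, Function.update_of_ne hne2] using (hb j).2
      · have hf : s f = s b := by rw [hrelu, max_eq_left h]
        have haux : s aux = 0 := by linarith
        refine ihr _ _ hR ⟨s, hA, fun j => ⟨?_, ?_⟩, hr⟩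
        · rcases eq_or_ne j aux with rfl | hne
          · simp [updateBounds, haux]
          · rcases eq_or_ne j b with rfl | hne2
            · simpa [updateBounds, Function.update_of_ne hne] using h
            · simpa [updateBounds, Function.update_of_ne hne, Function.update_of_ne hne2] using (hb j).1
        · rcases eq_or_ne j aux with rfl | hne
          · simp [updateBounds, haux]
          · simpa [updateBounds, Function.update_of_ne hne] using (hb j).2
end
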